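/- Let V be a right Banach ℍ-module and T ∈ B(V). If q ∈ σ_S(T) is a right eigenvalue of finite type of T, then q ∉ σ_e^S(T). -/

import Mathlib

/-!
Quaternionic setting: `ℍ` is the real quaternions.  A right Banach `ℍ`-module is
formalized as a real Banach space `V` together with a compatible `Module ℍᵐᵒᵖ V`
structure (right `ℍ`-action) satisfying `‖x • q‖ = ‖x‖ * |q|`; bounded right
`ℍ`-linear operators are the continuous `ℍᵐᵒᵖ`-linear maps `V →L[ℍᵐᵒᵖ] V`.
-/

open MulOpposite

notation "ℍ" => Quaternion ℝ

section Defs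

variable {W : Type*} [NormedAddCommGroup W] [Module ℍᵐᵒᵖ W] [Module ℝ W]
  [SMulCommClass ℍᵐᵒᵖ ℝ W] [ContinuousConstSMul ℝ W]

/-- `Q_q(T) = T² − 2 Re(q) T + |q|² I`. -/
noncomputable def Qs (T : W →L[ℍᵐᵒᵖ] W) (q : ℍ) : W →L[ℍᵐᵒᵖ] W :=
  T * T - (2 * q.re) • T + (‖q‖ ^ 2) • (1 : W →L[ℍᵐᵒᵖ] W)

/-- The S-resolvent set: `q` such that `Q_q(T)` is bijective with bounded inverse,
i.e. invertible in the ring `B(W)`. -/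
noncomputable def sResolvent (T : W →L[ℍᵐᵒᵖ] W) : Set ℍ :=
  {q | IsUnit (Qs T q)}

/-- The S-spectrum `σ_S(T) = ℍ \ ρ_S(T)`. -/
noncomputable def sSpectrum (T : W →L[ℍᵐᵒᵖ] W) : Set ℍ :=
  {q | ¬ IsUnit (Qs T q)}

/-- A compact operator: the image of the closed unit ball is relatively compact. -/
def IsCompactOp (K : W →L[ℍᵐᵒᵖ] W) : Prop :=
  IsCompact (closure (⇑K '' Metric.closedBall (0 : W) 1))

/-- `S` is a quasi-inverse of `T` if `S T = I - K₁` and `T S = I - K₂` with `K₁, K₂` compact. -/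
def IsQuasiInverse (S T : W →L[ℍᵐᵒᵖ] W) : Prop :=
  ∃ K₁ K₂ : W →L[ℍᵐᵒᵖ] W, IsCompactOp K₁ ∧ IsCompactOp K₂ ∧
    S * T = 1 - K₁ ∧ T * S = 1 - K₂

/-- The essential S-spectrum: `q` such that `Q_q(T)` admits no quasi-inverse. -/
noncomputable def essSpectrum (T : W →L[ℍᵐᵒᵖ] W) : Set ℍ :=
  {q | ¬ ∃ S : W →L[ℍᵐᵒᵖ] W, IsQuasiInverse S (Qs T q)}

/-- The Weyl S-spectrum: `⋂ σ_S(T + K)` over all compact `K`. -/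
noncomputable def weylSpectrum (T : W →L[ℍᵐᵒᵖ] W) : Set ℍ :=
  ⋂ K ∈ {K : W →L[ℍᵐᵒᵖ] W | IsCompactOp K}, sSpectrum (T + K)

/-- The 2-sphere `[q] = {h q h⁻¹ : h ∈ ℍ \ {0}}`. -/
def qSphere (q : ℍ) : Set ℍ := {p | ∃ h : ℍ, h ≠ 0 ∧ p = h * q * h⁻¹}

/-- Minimum modulus `μ(T) = inf {‖T x‖ : ‖x‖ = 1}`. -/
noncomputable def muMin (T : W →L[ℍᵐᵒᵖ] W) : ℝ :=
  sInf {c : ℝ | ∃ x : W, ‖x‖ = 1 ∧ c = ‖T x‖}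

/-- Operator norm of a bounded right `ℍ`-linear operator. -/
noncomputable def opNorm (T : W →L[ℍᵐᵒᵖ] W) : ℝ :=
  sInf {c : ℝ | 0 ≤ c ∧ ∀ x : W, ‖T x‖ ≤ c * ‖x‖}

/-- Restriction of `T` to an invariant submodule. -/
noncomputable def restrictOp (T : W →L[ℍᵐᵒᵖ] W) (M : Submodule ℍᵐᵒᵖ W)
    (h : ∀ x ∈ M, T x ∈ M) : ↥M →L[ℍᵐᵒᵖ] ↥M where
  toLinearMap := (T : W →ₗ[ℍᵐᵒᵖ] W).restrict h
  cont := Continuous.subtype_mk (T.continuous.comp continuous_subtype_val) _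

end Defs

section Sub

variable {V : Type*} [NormedAddCommGroup V] [NormedSpace ℝ V]
  [Module ℍᵐᵒᵖ V] [IsScalarTower ℝ ℍᵐᵒᵖ V] [SMulCommClass ℍᵐᵒᵖ ℝ V]

instance (M : Submodule ℍᵐᵒᵖ V) : SMulCommClass ℍᵐᵒᵖ ℝ ↥M := by
  constructor
  intro q r x
  apply Subtype.ext
  simp only [Submodule.coe_smul_of_tower, SetLike.val_smul]
  exact smul_comm q r (x : V)

instance (M : Submodule ℍᵐᵒᵖ V) : ContinuousConstSMul ℝ ↥M := by
  constructor
  intro r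
  have h : Continuous fun x : ↥M => r • (x : V) :=
    (continuous_const_smul r).comp continuous_subtype_val
  exact Continuous.subtype_mk h _

/-- `q` is a right eigenvalue of finite type of `T`: `V` is the direct sum of two closed
`T`-invariant right `ℍ`-submodules `M₁`, `M₂` with `M₁` finite-dimensional over `ℍ`,
`σ_S(T|M₁) ∩ σ_S(T|M₂) = ∅` and `σ_S(T|M₁) = [q]`. -/
noncomputable def IsFiniteTypeEigenvalue (T : V →L[ℍᵐᵒᵖ] V) (q : ℍ) : Prop :=
  ∃ (M₁ M₂ : Submodule ℍᵐᵒᵖ V) (h₁ : ∀ x ∈ M₁, T x ∈ M₁) (h₂ : ∀ x ∈ M₂, T x ∈ M₂),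
    IsClosed (M₁ : Set V) ∧ IsClosed (M₂ : Set V) ∧ IsCompl M₁ M₂ ∧
    FiniteDimensional ℍᵐᵒᵖ ↥M₁ ∧
    sSpectrum (restrictOp T M₁ h₁) ∩ sSpectrum (restrictOp T M₂ h₂) = ∅ ∧
    sSpectrum (restrictOp T M₁ h₁) = qSphere q

end Sub

/-!
Since `q ∈ [q] = σ_S(T|V₁)` and the two restricted S-spectra are disjoint, `Q_q(T)` restricts to
an invertible operator `R` on `V₂`. In a Banach space closed complementary submodules are
topological complements, so the projection `P₁` onto `V₁` along `V₂` is bounded; it has finite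
rank, hence is compact. As `Q_q(T)` preserves both summands, `S = R P₂` with `P₂ = I − P₁`
satisfies `S Q_q(T) = Q_q(T) S = I − P₁`.
-/

open Submodule

theorem mem_qSphere_self (q : ℍ) : q ∈ qSphere q :=
  ⟨1, one_ne_zero, by simp⟩

namespace Submodule

section RestrictScalars

variable {S R M : Type*} [Ring S] [Ring R] [AddCommGroup M] [Module S R] [Module R M]
  [Module S M] [IsScalarTower S R M]

theorem coe_projection_restrictScalars {p q : Submodule R M} (h : IsCompl p q)
    (h' : IsCompl (p.restrictScalars S) (q.restrictScalars S)) :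
    ⇑((p.restrictScalars S).projection (q.restrictScalars S) h') = p.projection q h := by
  funext x
  conv_lhs => rw [← projection_add_projection_eq_self h x]
  rw [map_add, projection_apply_of_mem_left h' (projection_apply_mem h x),
    projection_apply_of_mem_right h' (projection_apply_mem h.symm x), add_zero]

end RestrictScalars

section RealBanach

variable {R V : Type*} [Ring R] [Module ℝ R] [NormedAddCommGroup V] [NormedSpace ℝ V]
  [Module R V] [IsScalarTower ℝ R V]

theorem IsCompl.isTopCompl_of_isClosed_of_isScalarTower [CompleteSpace V]
    {p q : Submodule R V} (h : IsCompl p q) (hp : IsClosed (p : Set V))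
    (hq : IsClosed (q : Set V)) : IsTopCompl p q := by
  have h' := (isCompl_restrictScalars_iff (S := ℝ)).2 h
  refine h.isTopCompl_iff.2 ?_
  rw [← coe_projection_restrictScalars h h']
  exact (IsCompl.isTopCompl_of_isClosed h' hp hq).continuous_projection

theorem isCompactOperator_projectionL [Module.Finite ℝ R] {p q : Submodule R V}
    [Module.Finite R p] (h : IsTopCompl p q) : IsCompactOperator (p.projectionL q h) := by
  have : FiniteDimensional ℝ p := Module.Finite.trans R p
  have : ProperSpace p := FiniteDimensional.proper_real p
  exact (isCompactOperator_of_locallyCompactSpace_dom (p.projectionOntoL q h)).clm_comp p.subtypeL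

end RealBanach

end Submodule

section RestrictOp

variable {V : Type*} [NormedAddCommGroup V] [Module ℍᵐᵒᵖ V]

@[simp]
theorem restrictOp_apply (T : V →L[ℍᵐᵒᵖ] V) (M : Submodule ℍᵐᵒᵖ V) (h : ∀ x ∈ M, T x ∈ M)
    (x : M) : (restrictOp T M h x : V) = T x :=
  rfl

theorem subtypeL_comp_restrictOp (T : V →L[ℍᵐᵒᵖ] V) (M : Submodule ℍᵐᵒᵖ V)
    (h : ∀ x ∈ M, T x ∈ M) : M.subtypeL ∘L restrictOp T M h = T ∘L M.subtypeL :=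
  rfl

variable {A : V →L[ℍᵐᵒᵖ] V} {M₁ M₂ : Submodule ℍᵐᵒᵖ V}

theorem projectionOntoL_comp_of_invariant (hM : IsTopCompl M₁ M₂) (h₁ : ∀ x ∈ M₁, A x ∈ M₁)
    (h₂ : ∀ x ∈ M₂, A x ∈ M₂) :
    M₁.projectionOntoL M₂ hM ∘L A = restrictOp A M₁ h₁ ∘L M₁.projectionOntoL M₂ hM := by
  ext x : 1
  apply Subtype.ext
  simp only [ContinuousLinearMap.comp_apply, restrictOp_apply, coe_projectionOntoL_apply]
  conv_lhs => rw [← projectionL_add_projectionL_eq_self hM x]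
  rw [map_add, map_add,
    projectionL_apply_eq_zero_of_mem_right hM (h₂ _ (projectionL_apply_mem hM.symm x)), add_zero,
    (projectionL_eq_self_iff hM _).2 (h₁ _ (projectionL_apply_mem hM x))]

theorem subtypeL_comp_projectionOntoL_mul (hM : IsTopCompl M₁ M₂) (h₁ : ∀ x ∈ M₁, A x ∈ M₁)
    (h₂ : ∀ x ∈ M₂, A x ∈ M₂) {R : M₂ →L[ℍᵐᵒᵖ] M₂} (hR : R * restrictOp A M₂ h₂ = 1) :
    M₂.subtypeL ∘L R ∘L M₂.projectionOntoL M₁ hM.symm * A = 1 - M₁.projectionL M₂ hM := by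
  rw [ContinuousLinearMap.mul_def, ContinuousLinearMap.comp_assoc, ContinuousLinearMap.comp_assoc,
    projectionOntoL_comp_of_invariant hM.symm h₂ h₁, ← ContinuousLinearMap.comp_assoc R,
    ← ContinuousLinearMap.mul_def, hR, ContinuousLinearMap.one_def, ContinuousLinearMap.id_comp]
  exact projectionL_eq_id_sub_projectionL hM

theorem mul_subtypeL_comp_projectionOntoL (hM : IsTopCompl M₁ M₂) (h₂ : ∀ x ∈ M₂, A x ∈ M₂)
    {R : M₂ →L[ℍᵐᵒᵖ] M₂} (hR : restrictOp A M₂ h₂ * R = 1) :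
    A * (M₂.subtypeL ∘L R ∘L M₂.projectionOntoL M₁ hM.symm) = 1 - M₁.projectionL M₂ hM := by
  rw [ContinuousLinearMap.mul_def, ← ContinuousLinearMap.comp_assoc,
    ← subtypeL_comp_restrictOp A M₂ h₂, ContinuousLinearMap.comp_assoc,
    ← ContinuousLinearMap.comp_assoc _ R, ← ContinuousLinearMap.mul_def, hR,
    ContinuousLinearMap.one_def, ContinuousLinearMap.id_comp]
  exact projectionL_eq_id_sub_projectionL hM

end RestrictOp

section Quaternionic

variable {V : Type*} [NormedAddCommGroup V] [NormedSpace ℝ V]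
  [Module ℍᵐᵒᵖ V] [IsScalarTower ℝ ℍᵐᵒᵖ V]

theorem isCompactOp_iff_isCompactOperator (K : V →L[ℍᵐᵒᵖ] V) :
    IsCompactOp K ↔ IsCompactOperator K :=
  (isCompactOperator_iff_isCompact_closure_image_closedBall
    ((K : V →ₗ[ℍᵐᵒᵖ] V).restrictScalars ℝ) one_pos).symm

theorem exists_isQuasiInverse_of_isCompl [CompleteSpace V] {A : V →L[ℍᵐᵒᵖ] V}
    {M₁ M₂ : Submodule ℍᵐᵒᵖ V} [Module.Finite ℍᵐᵒᵖ M₁] (hM : IsCompl M₁ M₂)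
    (hM₁ : IsClosed (M₁ : Set V)) (hM₂ : IsClosed (M₂ : Set V)) (h₁ : ∀ x ∈ M₁, A x ∈ M₁)
    (h₂ : ∀ x ∈ M₂, A x ∈ M₂) (hA : IsUnit (restrictOp A M₂ h₂)) :
    ∃ S, IsQuasiInverse S A := by
  have hM' := hM.isTopCompl_of_isClosed_of_isScalarTower hM₁ hM₂
  have hK : IsCompactOp (M₁.projectionL M₂ hM') :=
    (isCompactOp_iff_isCompactOperator _).2 (isCompactOperator_projectionL hM')
  obtain ⟨u, hu⟩ := hA
  exact ⟨_, _, _, hK, hK,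
    subtypeL_comp_projectionOntoL_mul hM' h₁ h₂ (hu ▸ u.inv_mul),
    mul_subtypeL_comp_projectionOntoL hM' h₂ (hu ▸ u.mul_inv)⟩

variable [SMulCommClass ℍᵐᵒᵖ ℝ V]

theorem Qs_apply_mem (T : V →L[ℍᵐᵒᵖ] V) (q : ℍ) (M : Submodule ℍᵐᵒᵖ V)
    (h : ∀ x ∈ M, T x ∈ M) : ∀ x ∈ M, Qs T q x ∈ M := fun _ hx =>
  M.add_mem (M.sub_mem (h _ (h _ hx)) (M.smul_of_tower_mem _ (h _ hx))) (M.smul_of_tower_mem _ hx)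

theorem restrictOp_Qs (T : V →L[ℍᵐᵒᵖ] V) (q : ℍ) (M : Submodule ℍᵐᵒᵖ V)
    (h : ∀ x ∈ M, T x ∈ M) :
    restrictOp (Qs T q) M (Qs_apply_mem T q M h) = Qs (restrictOp T M h) q := by
  ext x
  simp [Qs]

end Quaternionic

theorem stmt4_general {V : Type*} [NormedAddCommGroup V] [NormedSpace ℝ V] [CompleteSpace V]
    [Module ℍᵐᵒᵖ V] [IsScalarTower ℝ ℍᵐᵒᵖ V] [SMulCommClass ℍᵐᵒᵖ ℝ V]
    (T : V →L[ℍᵐᵒᵖ] V) (q : ℍ)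
    (hft : IsFiniteTypeEigenvalue T q) :
    q ∉ essSpectrum T := by
  obtain ⟨M₁, M₂, h₁, h₂, hM₁, hM₂, hM, _, hdisj, hsphere⟩ := hft
  have hunit : IsUnit (Qs (restrictOp T M₂ h₂) q) := by
    by_contra hq
    exact hdisj.subset ⟨hsphere ▸ mem_qSphere_self q, hq⟩
  rw [← restrictOp_Qs] at hunit
  exact not_not.2 (exists_isQuasiInverse_of_isCompl hM hM₁ hM₂ (Qs_apply_mem T q M₁ h₁) _ hunit)

theorem stmt4 {V : Type*} [NormedAddCommGroup V] [NormedSpace ℝ V] [CompleteSpace V]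
    [Module ℍᵐᵒᵖ V] [IsScalarTower ℝ ℍᵐᵒᵖ V] [SMulCommClass ℍᵐᵒᵖ ℝ V]
    (hnorm : ∀ (x : V) (q : ℍ), ‖op q • x‖ = ‖x‖ * ‖q‖)
    (T : V →L[ℍᵐᵒᵖ] V) (q : ℍ) (hq : q ∈ sSpectrum T)
    (hft : IsFiniteTypeEigenvalue T q) :
    q ∉ essSpectrum T :=
  stmt4_general T q hft
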